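/- arXiv:1211.6547 — 2 statements merged into one kernel-verified Lean document; each statement's English description precedes it below -/
import Mathlib

section
/- Fix t ∈ (0,1). Assume there exist a constant C > 0 and a neighborhood U ⊆ [0,1] of t such that μ_τ(A) ≤ C·m(A) for every Borel set A ⊆ X and every τ ∈ U, and assume m(e_t(G)^{ε₀}) < ∞ for some ε₀ > 0. Then lim_{s→0} 𝛄({γ ∈ G : γ_{t+s} ∉ e_t(G)}) = 0; in other words, the 𝛄-measure of the set of curves in the support of 𝛄 whose position at time t+s lies outside e_t(G) tends to 0 as s → 0. -/
open MeasureTheory Set Filter Metric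

/-- Evaluation of a continuous curve `γ : C([0,1], X)` at a real time `τ`
(times outside `[0,1]` are clamped via `projIcc`; we only use `τ ∈ [0,1]`). -/
noncomputable def ev {X : Type*} [TopologicalSpace X] (τ : ℝ) (γ : C(unitInterval, X)) : X :=
  γ (Set.projIcc 0 1 zero_le_one τ)

/-- A curve `γ ∈ C([0,1], X)` is a constant-speed geodesic if
`d(γ_s, γ_τ) = |s - τ| · d(γ_0, γ_1)` for all `s, τ ∈ [0,1]`. -/
def IsCSGeodesic {X : Type*} [MetricSpace X] (γ : C(unitInterval, X)) : Prop :=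
  ∀ s τ : unitInterval, dist (γ s) (γ τ) = |(s : ℝ) - (τ : ℝ)| * dist (γ 0) (γ 1)

/-- The (topological) support of a Borel measure: the set of points all of whose
open neighborhoods have positive measure. -/
def mSupport {α : Type*} [TopologicalSpace α] [MeasurableSpace α]
    (μ : MeasureTheory.Measure α) : Set α :=
  {x | ∀ U : Set α, IsOpen U → x ∈ U → 0 < μ U}

open Topology

/-! A curve of `G` moves a distance at most `|s| D` between the times `t` and `t + s`, where `D`
bounds the lengths of the geodesics of the compact set `G`. So if its position at time `t + s`
is not in `K = e_t(G)`, it lies in the thin shell `K^{|s| D} \ K`, whose `μ_{t+s}`-measure is at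
most `C m(K^{|s| D} \ K)`. Since `K` is closed and some thickening of it has finite `m`-measure,
`m(K^δ \ K) → 0` as `δ → 0`. -/

theorem continuous_ev {X : Type*} [TopologicalSpace X] (τ : ℝ) :
    Continuous (ev τ : C(unitInterval, X) → X) :=
  continuous_eval_const _

theorem IsCSGeodesic.dist_ev {X : Type*} [MetricSpace X] {γ : C(unitInterval, X)}
    (hγ : IsCSGeodesic γ) {τ τ' : ℝ} (hτ : τ ∈ Icc (0 : ℝ) 1) (hτ' : τ' ∈ Icc (0 : ℝ) 1) :
    dist (ev τ γ) (ev τ' γ) = |τ - τ'| * dist (γ 0) (γ 1) := by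
  rw [ev, ev, hγ, projIcc_of_mem _ hτ, projIcc_of_mem _ hτ']

theorem setOf_ev_notMem_subset_preimage_cthickening_diff {X : Type*} [MetricSpace X]
    {G : Set C(unitInterval, X)} (hGgeo : ∀ γ ∈ G, IsCSGeodesic γ)
    {D : ℝ} (hD : ∀ γ ∈ G, dist (γ 0) (γ 1) ≤ D)
    {τ s : ℝ} (hτ : τ ∈ Icc (0 : ℝ) 1) (hτs : τ + s ∈ Icc (0 : ℝ) 1) :
    {γ | γ ∈ G ∧ ev (τ + s) γ ∉ ev τ '' G} ⊆
      ev (τ + s) ⁻¹' (cthickening (|s| * D) (ev τ '' G) \ ev τ '' G) := by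
  rintro γ ⟨hγG, hγK⟩
  refine ⟨mem_cthickening_of_dist_le _ _ _ _ (mem_image_of_mem _ hγG) ?_, hγK⟩
  rw [(hGgeo γ hγG).dist_ev hτs hτ, add_sub_cancel_left]
  exact mul_le_mul_of_nonneg_left (hD γ hγG) (abs_nonneg s)

theorem tendsto_measure_cthickening_diff_of_isClosed {α : Type*} [PseudoMetricSpace α]
    [MeasurableSpace α] [OpensMeasurableSpace α] {μ : Measure α} {K : Set α}
    (hK : IsClosed K) (hfin : ∃ R > 0, μ (cthickening R K) ≠ ⊤) :
    Tendsto (fun r => μ (cthickening r K \ K)) (𝓝 0) (𝓝 0) := by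
  obtain ⟨R, hR₀, hR⟩ := hfin
  have hKfin : μ K ≠ ⊤ := ne_top_of_le_ne_top hR (measure_mono (self_subset_cthickening K))
  have hdiff : ∀ r, μ (cthickening r K \ K) = μ (cthickening r K) - μ K := fun r =>
    measure_sdiff (self_subset_cthickening K) hK.measurableSet.nullMeasurableSet hKfin
  simp only [hdiff]
  simpa using ENNReal.Tendsto.sub (tendsto_measure_cthickening_of_isClosed ⟨R, hR₀, hR⟩ hK)
    (tendsto_const_nhds (x := μ K)) (Or.inl hKfin)

theorem mass_escaping_support_tendsto_zero_general
    {X : Type*} [MetricSpace X]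
    [MeasurableSpace X] [BorelSpace X]
    (m : MeasureTheory.Measure X)
    [MeasurableSpace C(unitInterval, X)] [BorelSpace C(unitInterval, X)]
    (P : MeasureTheory.Measure C(unitInterval, X))
    (G : Set C(unitInterval, X))
    (hGcpt : IsCompact G) (hGgeo : ∀ γ ∈ G, IsCSGeodesic γ)
    (t : ℝ) (ht : t ∈ Set.Ioo (0 : ℝ) 1)
    (C : ℝ)
    (U : Set ℝ) (hUnhds : U ∈ nhdsWithin t (Set.Icc (0 : ℝ) 1))
    (hdens : ∀ τ ∈ U, ∀ A : Set X, MeasurableSet A →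
      MeasureTheory.Measure.map (ev τ) P A ≤ ENNReal.ofReal C * m A)
    (ε₀ : ℝ) (hε₀ : 0 < ε₀)
    (hfin : m (Metric.cthickening ε₀ (ev t '' G)) < ⊤) :
    Filter.Tendsto (fun s : ℝ => P {γ | γ ∈ G ∧ ev (t + s) γ ∉ ev t '' G})
      (nhds 0) (nhds 0) := by
  obtain ⟨D, hD⟩ := hGcpt.bddAbove_image (f := fun γ => dist (γ 0) (γ 1)) (by fun_prop)
  set K := ev t '' G
  have hK : IsClosed K := (hGcpt.image (continuous_ev t)).isClosed
  have hshell : Tendsto (fun s : ℝ => ENNReal.ofReal C * m (cthickening (|s| * D) K \ K))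
      (𝓝 0) (𝓝 0) := by
    have hδ : Tendsto (fun s : ℝ => |s| * D) (𝓝 0) (𝓝 0) := by
      simpa only [abs_zero, zero_mul] using
        (by fun_prop : Continuous fun s : ℝ => |s| * D).tendsto 0
    simpa using ENNReal.Tendsto.const_mul
      ((tendsto_measure_cthickening_diff_of_isClosed hK ⟨ε₀, hε₀, hfin.ne⟩).comp hδ)
      (Or.inr ENNReal.ofReal_ne_top)
  have htime : ∀ᶠ s in 𝓝 (0 : ℝ), t + s ∈ U ∩ Icc 0 1 := by
    have hUI : U ∩ Icc 0 1 ∈ 𝓝 t := by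
      rw [← nhdsWithin_eq_nhds.2 (Icc_mem_nhds ht.1 ht.2)]
      exact inter_mem hUnhds self_mem_nhdsWithin
    exact ((continuous_const_add t).tendsto' 0 t (add_zero t)).eventually_mem hUI
  refine tendsto_of_tendsto_of_tendsto_of_le_of_le' tendsto_const_nhds hshell
    (.of_forall fun _ => bot_le) ?_
  filter_upwards [htime] with s ⟨hsU, hsI⟩
  have hshell_meas : MeasurableSet (cthickening (|s| * D) K \ K) :=
    isClosed_cthickening.measurableSet.diff hK.measurableSet
  calc P {γ | γ ∈ G ∧ ev (t + s) γ ∉ K}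
      ≤ P (ev (t + s) ⁻¹' (cthickening (|s| * D) K \ K)) :=
        measure_mono (setOf_ev_notMem_subset_preimage_cthickening_diff hGgeo
          (fun γ hγ => hD (mem_image_of_mem _ hγ)) (Ioo_subset_Icc_self ht) hsI)
    _ = Measure.map (ev (t + s)) P (cthickening (|s| * D) K \ K) :=
        (Measure.map_apply (continuous_ev _).measurable hshell_meas).symm
    _ ≤ ENNReal.ofReal C * m (cthickening (|s| * D) K \ K) := hdens _ hsU _ hshell_meas

/-- Under the bounded-density assumption near `t ∈ (0,1)`, the `P`-measure
of the set of curves in `G` whose position at time `t + s` lies outside `e_t(G)` tends to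
`0` as `s → 0`. -/
theorem mass_escaping_support_tendsto_zero
    {X : Type*} [MetricSpace X] [CompleteSpace X] [TopologicalSpace.SeparableSpace X]
    [MeasurableSpace X] [BorelSpace X]
    (m : MeasureTheory.Measure X)
    [MeasurableSpace C(unitInterval, X)] [BorelSpace C(unitInterval, X)]
    (P : MeasureTheory.Measure C(unitInterval, X)) [IsProbabilityMeasure P]
    (G : Set C(unitInterval, X)) (hGsupp : G = mSupport P)
    (hGcpt : IsCompact G) (hGgeo : ∀ γ ∈ G, IsCSGeodesic γ)
    (t : ℝ) (ht : t ∈ Set.Ioo (0 : ℝ) 1)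
    (C : ℝ) (hC : 0 < C)
    (U : Set ℝ) (hUsub : U ⊆ Set.Icc (0 : ℝ) 1) (hUnhds : U ∈ nhdsWithin t (Set.Icc (0 : ℝ) 1))
    (hdens : ∀ τ ∈ U, ∀ A : Set X, MeasurableSet A →
      MeasureTheory.Measure.map (ev τ) P A ≤ ENNReal.ofReal C * m A)
    (ε₀ : ℝ) (hε₀ : 0 < ε₀)
    (hfin : m (Metric.cthickening ε₀ (ev t '' G)) < ⊤) :
    Filter.Tendsto (fun s : ℝ => P {γ | γ ∈ G ∧ ev (t + s) γ ∉ ev t '' G})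
      (nhds 0) (nhds 0) :=
  mass_escaping_support_tendsto_zero_general m P G hGcpt hGgeo t ht C U hUnhds hdens ε₀ hε₀ hfin
end

section
/- Fix t ∈ (0,1). Suppose H ⊆ G is a Borel set with 𝛄(H) > 0 and α > 0 is such that liminf_{ε→0⁺} ℒ¹(I_t^c(γ) ∩ (t−ε, t+ε))/(2ε) > α for every γ ∈ H, where I_t^c(γ) := [0,1] ∖ I_t(γ). Then there exist a constant c > 0 and a sequence (s_n) of reals with s_n → 0 such that 𝛄({γ ∈ H : t + s_n ∈ I_t^c(γ)}) ≥ c for all n. -/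
/-!
For each `γ ∈ H` the density bound holds at all radii `εₘ = 1/(m+1)` with `m` large, and since
`H` is the countable union over `k` of the sets `Hₖ` where it holds for all `m ≥ k`, some `Hₖ` has
positive measure. For `m ≥ k`, the set `{(γ, τ) | τ ∈ I_t^c(γ)}` meets `Hₖ × (t - εₘ, t + εₘ)` in
product measure at least `α · 2εₘ · 𝛄(Hₖ)`, so by Fubini some time `τₘ` of the window has slice
`{γ ∈ Hₖ | τₘ ∈ I_t^c(γ)}` of measure at least `α · 𝛄(Hₖ)`; take `sₘ = τₘ - t`.
-/

open MeasureTheory Set Filter Metric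

open scoped ENNReal Topology

theorem exists_mem_mul_le_measure_inter_preimage {α β : Type*} [MeasurableSpace α]
    [MeasurableSpace β] {μ : Measure α} {ν : Measure β} [IsFiniteMeasure μ] [SFinite ν]
    {S : Set (α × β)} (hS : MeasurableSet S) {A : Set α} {B : Set β} (hB : MeasurableSet B)
    (hB₀ : ν B ≠ 0) (hB_top : ν B ≠ ∞) {c : ℝ≥0∞}
    (hc : ∀ a ∈ A, c * ν B ≤ ν (Prod.mk a ⁻¹' S ∩ B)) :
    ∃ b ∈ B, c * μ A ≤ μ (A ∩ (fun a => (a, b)) ⁻¹' S) := by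
  by_contra! h
  have hslice (b : β) :
      μ (A ∩ (fun a => (a, b)) ⁻¹' S) = μ.restrict A ((fun a => (a, b)) ⁻¹' S) := by
    rw [Measure.restrict_apply (hS.preimage measurable_prodMk_right), inter_comm]
  have hfin : ∫⁻ b in B, μ.restrict A ((fun a => (a, b)) ⁻¹' S) ∂ν ≠ ∞ := by
    refine ne_top_of_le_ne_top (ENNReal.mul_ne_top (measure_ne_top μ A) hB_top) ?_
    calc ∫⁻ b in B, μ.restrict A ((fun a => (a, b)) ⁻¹' S) ∂ν
        ≤ ∫⁻ _ in B, μ A ∂ν := lintegral_mono fun b => by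
          rw [← hslice]; exact measure_mono inter_subset_left
      _ = μ A * ν B := setLIntegral_const B _
  refine lt_irrefl (c * ν B * μ A) ?_
  calc c * ν B * μ A = ∫⁻ _ in A, c * ν B ∂μ := (setLIntegral_const A _).symm
    _ ≤ ∫⁻ a in A, ν.restrict B (Prod.mk a ⁻¹' S) ∂μ :=
        setLIntegral_mono (measurable_measure_prodMk_left hS) fun a ha => by
          rw [Measure.restrict_apply (hS.preimage measurable_prodMk_left)]; exact hc a ha
    _ = (μ.restrict A).prod (ν.restrict B) S := (Measure.prod_apply hS).symm
    _ = ∫⁻ b in B, μ.restrict A ((fun a => (a, b)) ⁻¹' S) ∂ν := Measure.prod_apply_symm hS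
    _ < ∫⁻ _ in B, c * μ A ∂ν := setLIntegral_strict_mono hB hB₀ measurable_const hfin
        (ae_of_all _ fun b hb => hslice b ▸ h b hb)
    _ = c * ν B * μ A := by rw [setLIntegral_const, mul_right_comm]

theorem exists_pos_measure_forall_ge {α : Type*} [MeasurableSpace α] {μ : Measure α}
    {H : Set α} (hH : 0 < μ H) {p : ℕ → α → Prop} (hp : ∀ x ∈ H, ∀ᶠ n in atTop, p n x) :
    ∃ k, 0 < μ {x | x ∈ H ∧ ∀ n ≥ k, p n x} := by
  refine exists_measure_pos_of_not_measure_iUnion_null (ne_bot_of_le_ne_bot hH.ne' ?_)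
  refine measure_mono fun x hx => ?_
  obtain ⟨k, hk⟩ := eventually_atTop.1 (hp x hx)
  exact mem_iUnion.2 ⟨k, hx, hk⟩

theorem eventually_ofReal_mul_volume_le_of_lt_liminf {A : Set ℝ} {t α : ℝ}
    (h : α < liminf (fun ε => (volume (A ∩ Ioo (t - ε) (t + ε))).toReal / (2 * ε)) (𝓝[>] 0)) :
    ∀ᶠ ε in 𝓝[>] 0, ENNReal.ofReal α * volume (Ioo (t - ε) (t + ε)) ≤
      volume (A ∩ Ioo (t - ε) (t + ε)) := by
  have hbdd : IsBoundedUnder (· ≥ ·) (𝓝[>] (0 : ℝ))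
      (fun ε => (volume (A ∩ Ioo (t - ε) (t + ε))).toReal / (2 * ε)) :=
    isBoundedUnder_of_eventually_ge (a := 0) <| eventually_nhdsWithin_of_forall
      fun ε (hε : 0 < ε) => by positivity
  filter_upwards [eventually_lt_of_lt_liminf h hbdd, self_mem_nhdsWithin] with ε hα (hε : 0 < ε)
  have hfin : volume (A ∩ Ioo (t - ε) (t + ε)) ≠ ∞ :=
    ne_top_of_le_ne_top measure_Ioo_lt_top.ne (measure_mono inter_subset_right)
  rw [Real.volume_Ioo, ← ENNReal.ofReal_mul' (by linarith), ← ENNReal.ofReal_toReal hfin]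
  refine ENNReal.ofReal_le_ofReal ?_
  rw [lt_div_iff₀ (by positivity)] at hα
  linarith

theorem continuous_ev_uncurry {X : Type*} [TopologicalSpace X] :
    Continuous fun p : C(unitInterval, X) × ℝ => ev p.2 p.1 :=
  continuous_eval.comp
    (continuous_fst.prodMk ((continuous_projIcc (h := zero_le_one)).comp continuous_snd))

theorem IsClosed.measurableSet_ev_notMem {X : Type*} [TopologicalSpace X]
    [MeasurableSpace C(unitInterval, X)] [BorelSpace C(unitInterval, X)] {K : Set X}
    (hK : IsClosed K) :
    MeasurableSet {p : C(unitInterval, X) × ℝ |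
      p.2 ∈ Icc 0 1 \ {τ | τ ∈ Icc 0 1 ∧ ev τ p.1 ∈ K}} :=
  (measurable_snd measurableSet_Icc).diff
    ((measurable_snd measurableSet_Icc).inter (hK.preimage continuous_ev_uncurry).measurableSet)

theorem positive_measure_slices_of_complement_general
    {X : Type*} [MetricSpace X]
    [MeasurableSpace C(unitInterval, X)] [BorelSpace C(unitInterval, X)]
    (P : MeasureTheory.Measure C(unitInterval, X)) [IsProbabilityMeasure P]
    (G : Set C(unitInterval, X))
    (hGcpt : IsCompact G)
    (t : ℝ)
    (H : Set C(unitInterval, X))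
    (hHpos : 0 < P H)
    (α : ℝ) (hα : 0 < α)
    (hlb : ∀ γ ∈ H, α < Filter.liminf
        (fun ε : ℝ => (MeasureTheory.volume
            ((Set.Icc (0 : ℝ) 1 \ {τ : ℝ | τ ∈ Set.Icc (0 : ℝ) 1 ∧ ev τ γ ∈ ev t '' G}) ∩
              Set.Ioo (t - ε) (t + ε))).toReal / (2 * ε))
        (nhdsWithin 0 (Set.Ioi 0))) :
    ∃ c : ℝ, 0 < c ∧ ∃ s : ℕ → ℝ, Filter.Tendsto s Filter.atTop (nhds 0) ∧
      ∀ n : ℕ, ENNReal.ofReal c ≤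
        P {γ | γ ∈ H ∧ t + s n ∈
          Set.Icc (0 : ℝ) 1 \ {τ : ℝ | τ ∈ Set.Icc (0 : ℝ) 1 ∧ ev τ γ ∈ ev t '' G}} := by
  set K := ev t '' G
  set S : Set (C(unitInterval, X) × ℝ) := {p | p.2 ∈ Icc 0 1 \ {τ | τ ∈ Icc 0 1 ∧ ev τ p.1 ∈ K}}
  have hS : MeasurableSet S :=
    (hGcpt.image (continuous_eval_const _)).isClosed.measurableSet_ev_notMem
  set e : ℕ → ℝ := fun m => 1 / (m + 1)
  have he_pos (m : ℕ) : 0 < e m := Nat.one_div_pos_of_nat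
  have he : Tendsto e atTop (𝓝[>] 0) := tendsto_nhdsWithin_iff.2
    ⟨tendsto_one_div_add_atTop_nhds_zero_nat, Eventually.of_forall he_pos⟩
  obtain ⟨k, hk⟩ := exists_pos_measure_forall_ge hHpos fun γ hγ =>
    he.eventually (eventually_ofReal_mul_volume_le_of_lt_liminf (hlb γ hγ))
  set Hk := {γ | γ ∈ H ∧ ∀ m ≥ k, ENNReal.ofReal α * volume (Ioo (t - e m) (t + e m)) ≤
      volume ((Icc 0 1 \ {τ | τ ∈ Icc 0 1 ∧ ev τ γ ∈ K}) ∩ Ioo (t - e m) (t + e m))}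
  have exists_time (n : ℕ) : ∃ τ ∈ Ioo (t - e (n + k)) (t + e (n + k)),
      ENNReal.ofReal α * P Hk ≤ P (Hk ∩ (fun γ => (γ, τ)) ⁻¹' S) :=
    exists_mem_mul_le_measure_inter_preimage hS measurableSet_Ioo
      (isOpen_Ioo.measure_ne_zero _ (nonempty_Ioo.2 (by linarith [he_pos (n + k)])))
      measure_Ioo_lt_top.ne fun γ hγ => hγ.2 (n + k) (Nat.le_add_left k n)
  choose τ hτ hτP using exists_time
  refine ⟨α * (P Hk).toReal, mul_pos hα (ENNReal.toReal_pos hk.ne' (measure_ne_top _ _)),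
    fun n => τ n - t, ?_, fun n => ?_⟩
  · simp_rw [← Real.ball_eq_Ioo] at hτ
    exact squeeze_zero_norm (fun n => (mem_ball_iff_norm.1 (hτ n)).le)
      ((tendsto_nhdsWithin_iff.1 he).1.comp (tendsto_add_atTop_nat k))
  · calc ENNReal.ofReal (α * (P Hk).toReal) = ENNReal.ofReal α * P Hk := by
          rw [ENNReal.ofReal_mul hα.le, ENNReal.ofReal_toReal (measure_ne_top _ _)]
      _ ≤ P (Hk ∩ (fun γ => (γ, τ n)) ⁻¹' S) := hτP n
      _ ≤ _ := measure_mono fun γ hγ => show γ ∈ H ∧ _ from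
          ⟨hγ.1.1, by rw [add_sub_cancel]; exact hγ.2⟩

/-- If `H ⊆ G` has positive `P`-measure and for every `γ ∈ H` the lower
density of the complement `I_t^c(γ) = [0,1] \ I_t(γ)` at `t` exceeds `α > 0`, then there
are `c > 0` and a sequence `s_n → 0` with `P({γ ∈ H : t + s_n ∈ I_t^c(γ)}) ≥ c` for all
`n`. -/
theorem positive_measure_slices_of_complement
    {X : Type*} [MetricSpace X] [CompleteSpace X] [TopologicalSpace.SeparableSpace X]
    [MeasurableSpace C(unitInterval, X)] [BorelSpace C(unitInterval, X)]
    (P : MeasureTheory.Measure C(unitInterval, X)) [IsProbabilityMeasure P]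
    (G : Set C(unitInterval, X)) (hGsupp : G = mSupport P)
    (hGcpt : IsCompact G) (hGgeo : ∀ γ ∈ G, IsCSGeodesic γ)
    (t : ℝ) (ht : t ∈ Set.Ioo (0 : ℝ) 1)
    (H : Set C(unitInterval, X)) (hHsub : H ⊆ G) (hHmeas : MeasurableSet H)
    (hHpos : 0 < P H)
    (α : ℝ) (hα : 0 < α)
    (hlb : ∀ γ ∈ H, α < Filter.liminf
        (fun ε : ℝ => (MeasureTheory.volume
            ((Set.Icc (0 : ℝ) 1 \ {τ : ℝ | τ ∈ Set.Icc (0 : ℝ) 1 ∧ ev τ γ ∈ ev t '' G}) ∩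
              Set.Ioo (t - ε) (t + ε))).toReal / (2 * ε))
        (nhdsWithin 0 (Set.Ioi 0))) :
    ∃ c : ℝ, 0 < c ∧ ∃ s : ℕ → ℝ, Filter.Tendsto s Filter.atTop (nhds 0) ∧
      ∀ n : ℕ, ENNReal.ofReal c ≤
        P {γ | γ ∈ H ∧ t + s n ∈
          Set.Icc (0 : ℝ) 1 \ {τ : ℝ | τ ∈ Set.Icc (0 : ℝ) 1 ∧ ev τ γ ∈ ev t '' G}} :=
  positive_measure_slices_of_complement_general P G hGcpt t H hHpos α hα hlb
end
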